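/- arXiv:2604.05227 — 2 statements merged into one kernel-verified Lean document; each statement's English description precedes it below -/
import Mathlib

section
/- Let S be a set of size n, f a function on unordered pairs, and 2 ≤ k ≤ n. For the uniform subset estimator f̂ = (n(n-1))/(k(k-1)) · f(S_k) with S_k uniform over k-subsets, the variance equals Var[f̂] = (n(n-1)(n-k))/(2k(k-1)) · [ 2(E3 − E4)·k·n + (E2 − 4·E3 + 3·E4)·(n + k − 1) ], where E2 = E_{{u,v}}[f(u,v)²] over uniform unordered pairs, E3 = E[f(u,v)f(v,w)] over uniform ordered triples of distinct vertices, and E4 = E[f(u,v)f(w,z)] over uniform ordered quadruples of distinct vertices. -/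
open Finset

/-- Sum of a symmetric pair function `f` over all unordered pairs of distinct
elements of `T`. -/
noncomputable def pairSum {V : Type*} [DecidableEq V] (f : V → V → ℝ) (T : Finset V) : ℝ :=
  (∑ p ∈ T.offDiag, f p.1 p.2) / 2

/-- Sum of `f(u,v)·f(v,w)` over ordered triples of distinct vertices of `T`. -/
noncomputable def tripleSum {V : Type*} [DecidableEq V] (f : V → V → ℝ) (T : Finset V) : ℝ :=
  ∑ u ∈ T, ∑ v ∈ T \ {u}, ∑ w ∈ (T \ {u}) \ {v}, f u v * f v w

/-- Sum of `f(u,v)·f(w,z)` over ordered quadruples of distinct vertices of `T`. -/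
noncomputable def quadSum {V : Type*} [DecidableEq V] (f : V → V → ℝ) (T : Finset V) : ℝ :=
  ∑ u ∈ T, ∑ v ∈ T \ {u}, ∑ w ∈ (T \ {u}) \ {v}, ∑ z ∈ ((T \ {u}) \ {v}) \ {w},
    f u v * f w z

/-- `E2`: average of `f(u,v)^2` over the `C(n,2)` unordered pairs of distinct elements. -/
noncomputable def E2 {V : Type*} [DecidableEq V] (f : V → V → ℝ) (S : Finset V) (n : ℕ) : ℝ :=
  (∑ p ∈ S.offDiag, (f p.1 p.2) ^ 2) / ((n : ℝ) * ((n : ℝ) - 1))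

/-- `E3`: average of `f(u,v)·f(v,w)` over the `n(n-1)(n-2)` ordered triples of distinct
vertices. -/
noncomputable def E3 {V : Type*} [DecidableEq V] (f : V → V → ℝ) (S : Finset V) (n : ℕ) : ℝ :=
  tripleSum f S / ((n : ℝ) * ((n : ℝ) - 1) * ((n : ℝ) - 2))

/-- `E4`: average of `f(u,v)·f(w,z)` over the `n(n-1)(n-2)(n-3)` ordered quadruples of
distinct vertices. -/
noncomputable def E4 {V : Type*} [DecidableEq V] (f : V → V → ℝ) (S : Finset V) (n : ℕ) : ℝ :=
  quadSum f S / ((n : ℝ) * ((n : ℝ) - 1) * ((n : ℝ) - 2) * ((n : ℝ) - 3))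

/-- The subset Monte Carlo estimator `(n(n-1))/(k(k-1)) · f(S_k)`. -/
noncomputable def mcEst {V : Type*} [DecidableEq V] (f : V → V → ℝ) (n k : ℕ)
    (T : Finset V) : ℝ :=
  ((n : ℝ) * ((n : ℝ) - 1)) / ((k : ℝ) * ((k : ℝ) - 1)) * pairSum f T

/-- Variance of the subset Monte Carlo estimator under the uniform distribution over
`k`-subsets of `S`. -/
noncomputable def mcVar {V : Type*} [DecidableEq V] (f : V → V → ℝ) (S : Finset V)
    (n k : ℕ) : ℝ :=
  (∑ T ∈ S.powersetCard k, (mcEst f n k T) ^ 2) / (n.choose k : ℝ)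
    - ((∑ T ∈ S.powersetCard k, mcEst f n k T) / (n.choose k : ℝ)) ^ 2

/-!
Expanding the square of `∑_{u ≠ v ∈ T} f u v` according to how the two pairs overlap gives
`2 ∑ f² + 4 · tripleSum + quadSum` over `T`. Summing any such tuple sum over all `k`-subsets `T`
of `S` counts each `r`-tuple of distinct elements once for every `k`-subset containing it, that
is `C(n,k) · (k)_r / (n)_r` times. So both moments of the estimator are explicit combinations of
`E2`, `E3`, `E4`, and the variance formula is polynomial algebra.
-/

theorem Nat.cast_descFactorial_eq_prod_range {R : Type*} [CommRing R] (a b : ℕ) :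
    (a.descFactorial b : R) = ∏ i ∈ range b, ((a : R) - i) := by
  rw [← descPochhammer_eval_eq_descFactorial, descPochhammer_eval_eq_prod_range]

theorem sum_offDiag_comm {V : Type*} (T : Finset V) (h : V → V → ℝ) :
    ∑ p ∈ T.offDiag, h p.1 p.2 = ∑ p ∈ T.offDiag, h p.2 p.1 :=
  sum_equiv (Equiv.prodComm V V) (fun p => by simp [ne_comm, and_left_comm]) fun _ _ => rfl

section

variable {V : Type*} [DecidableEq V]

theorem sum_offDiag_eq_sum_sum (T : Finset V) (h : V → V → ℝ) :
    ∑ p ∈ T.offDiag, h p.1 p.2 = ∑ u ∈ T, ∑ v ∈ T \ {u}, h u v :=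
  sum_finset_product' _ _ _ fun p => by simp [ne_comm]

def distinctTriples (T : Finset V) : Finset (V × V × V) :=
  (T ×ˢ T.offDiag).filter fun x => x.1 ≠ x.2.1 ∧ x.1 ≠ x.2.2

def distinctQuads (T : Finset V) : Finset (V × V × V × V) :=
  (T ×ˢ distinctTriples T).filter fun x => x.1 ≠ x.2.1 ∧ x.1 ≠ x.2.2.1 ∧ x.1 ≠ x.2.2.2

theorem mem_distinctTriples {T : Finset V} {x : V × V × V} :
    x ∈ distinctTriples T ↔ x.1 ∈ T ∧ x.2 ∈ (T \ {x.1}).offDiag := by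
  simp only [distinctTriples, mem_filter, mem_product, mem_offDiag, mem_sdiff, mem_singleton]
  grind

theorem mem_distinctQuads {T : Finset V} {x : V × V × V × V} :
    x ∈ distinctQuads T ↔ x.1 ∈ T ∧ x.2 ∈ distinctTriples (T \ {x.1}) := by
  simp only [distinctQuads, mem_filter, mem_product, mem_distinctTriples, mem_offDiag, mem_sdiff,
    mem_singleton]
  grind

theorem sum_distinctTriples (T : Finset V) (h : V → V → V → ℝ) :
    ∑ x ∈ distinctTriples T, h x.1 x.2.1 x.2.2
      = ∑ u ∈ T, ∑ v ∈ T \ {u}, ∑ w ∈ (T \ {u}) \ {v}, h u v w := by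
  refine (sum_finset_product (f := fun x : V × V × V => h x.1 x.2.1 x.2.2) _ T
    (fun u => (T \ {u}).offDiag) fun _ => mem_distinctTriples).trans ?_
  exact sum_congr rfl fun u _ => sum_offDiag_eq_sum_sum _ (h u)

theorem sum_distinctQuads (T : Finset V) (h : V → V → V → V → ℝ) :
    ∑ x ∈ distinctQuads T, h x.1 x.2.1 x.2.2.1 x.2.2.2
      = ∑ u ∈ T, ∑ v ∈ T \ {u}, ∑ w ∈ (T \ {u}) \ {v}, ∑ z ∈ ((T \ {u}) \ {v}) \ {w},
          h u v w z := by
  refine (sum_finset_product (f := fun x : V × V × V × V => h x.1 x.2.1 x.2.2.1 x.2.2.2) _ T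
    (fun u => distinctTriples (T \ {u})) fun _ => mem_distinctQuads).trans ?_
  exact sum_congr rfl fun u _ => sum_distinctTriples _ (h u)

theorem offDiag_eq_filter_subset {S T : Finset V} (hTS : T ⊆ S) :
    T.offDiag = {p ∈ S.offDiag | {p.1, p.2} ⊆ T} := by
  ext p
  simp only [mem_offDiag, mem_filter, insert_subset_iff, singleton_subset_iff]
  have := @hTS p.1; have := @hTS p.2
  tauto

theorem distinctTriples_eq_filter_subset {S T : Finset V} (hTS : T ⊆ S) :
    distinctTriples T = {x ∈ distinctTriples S | {x.1, x.2.1, x.2.2} ⊆ T} := by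
  ext x
  simp only [distinctTriples, mem_filter, mem_product, mem_offDiag, insert_subset_iff,
    singleton_subset_iff]
  have := @hTS x.1; have := @hTS x.2.1; have := @hTS x.2.2
  tauto

theorem distinctQuads_eq_filter_subset {S T : Finset V} (hTS : T ⊆ S) :
    distinctQuads T = {x ∈ distinctQuads S | {x.1, x.2.1, x.2.2.1, x.2.2.2} ⊆ T} := by
  ext x
  simp only [distinctQuads, distinctTriples, mem_filter, mem_product, mem_offDiag,
    insert_subset_iff, singleton_subset_iff]
  have := @hTS x.1; have := @hTS x.2.1; have := @hTS x.2.2.1; have := @hTS x.2.2.2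
  tauto

/-- Unlike `Finset.card_filter_powersetCard_subset`, this form also holds for `k < #U`,
where both sides vanish. -/
theorem card_filter_powersetCard_subset_mul_descFactorial {U S : Finset V} (hUS : U ⊆ S)
    (k : ℕ) :
    #{T ∈ S.powersetCard k | U ⊆ T} * (#S).descFactorial #U
      = (#S).choose k * k.descFactorial #U := by
  rcases le_or_gt #U k with hUk | hkU
  · rw [card_filter_powersetCard_subset U S k hUS hUk, Nat.descFactorial_eq_factorial_mul_choose,
      Nat.descFactorial_eq_factorial_mul_choose, mul_left_comm ((#S).choose k),
      Nat.choose_mul hUk]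
    ring
  · have hempty : {T ∈ S.powersetCard k | U ⊆ T} = ∅ :=
      filter_eq_empty_iff.2 fun T hT hUT =>
        (card_le_card hUT).not_gt (by rw [(mem_powersetCard.1 hT).2]; exact hkU)
    rw [hempty, Nat.descFactorial_of_lt hkU, card_empty]
    ring

theorem descFactorial_mul_sum_powersetCard_sum_filter_subset {ι : Type*} (S : Finset V)
    (k r : ℕ) (X : Finset ι) (supp : ι → Finset V)
    (hsupp : ∀ x ∈ X, supp x ⊆ S ∧ #(supp x) = r) (g : ι → ℝ) :
    ((#S).descFactorial r : ℝ) * ∑ T ∈ S.powersetCard k, ∑ x ∈ X with supp x ⊆ T, g x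
      = (#S).choose k * k.descFactorial r * ∑ x ∈ X, g x := by
  simp_rw [sum_filter]
  rw [sum_comm, mul_sum, mul_sum]
  refine sum_congr rfl fun x hx => ?_
  obtain ⟨hxS, rfl⟩ := hsupp x hx
  rw [← sum_filter, sum_const, nsmul_eq_mul, ← mul_assoc, mul_comm _ (#_ : ℝ), ← Nat.cast_mul,
    card_filter_powersetCard_subset_mul_descFactorial hxS k, Nat.cast_mul]

theorem descFactorial_mul_sum_powersetCard_sum_offDiag (S : Finset V) (k : ℕ)
    (g : V → V → ℝ) :
    ((#S).descFactorial 2 : ℝ) * ∑ T ∈ S.powersetCard k, ∑ p ∈ T.offDiag, g p.1 p.2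
      = (#S).choose k * k.descFactorial 2 * ∑ p ∈ S.offDiag, g p.1 p.2 := by
  rw [← descFactorial_mul_sum_powersetCard_sum_filter_subset S k 2 S.offDiag
    (fun p => {p.1, p.2})]
  · congr 1
    exact sum_congr rfl fun T hT => by rw [offDiag_eq_filter_subset (mem_powersetCard.1 hT).1]
  · intro p hp
    obtain ⟨h1, h2, h12⟩ := mem_offDiag.1 hp
    exact ⟨by simp [insert_subset_iff, h1, h2], card_pair h12⟩

theorem descFactorial_mul_sum_powersetCard_tripleSum (S : Finset V) (k : ℕ)
    (f : V → V → ℝ) :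
    ((#S).descFactorial 3 : ℝ) * ∑ T ∈ S.powersetCard k, tripleSum f T
      = (#S).choose k * k.descFactorial 3 * tripleSum f S := by
  simp only [tripleSum, ← sum_distinctTriples]
  rw [← descFactorial_mul_sum_powersetCard_sum_filter_subset S k 3 (distinctTriples S)
    (fun x => {x.1, x.2.1, x.2.2})]
  · congr 1
    exact sum_congr rfl fun T hT => by
      rw [distinctTriples_eq_filter_subset (mem_powersetCard.1 hT).1]
  · intro x hx
    simp only [distinctTriples, mem_filter, mem_product, mem_offDiag] at hx
    exact ⟨by simp [insert_subset_iff, hx],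
      card_eq_three.2 ⟨_, _, _, hx.2.1, hx.2.2, hx.1.2.2.2, rfl⟩⟩

theorem descFactorial_mul_sum_powersetCard_quadSum (S : Finset V) (k : ℕ)
    (f : V → V → ℝ) :
    ((#S).descFactorial 4 : ℝ) * ∑ T ∈ S.powersetCard k, quadSum f T
      = (#S).choose k * k.descFactorial 4 * quadSum f S := by
  simp only [quadSum, ← sum_distinctQuads]
  rw [← descFactorial_mul_sum_powersetCard_sum_filter_subset S k 4 (distinctQuads S)
    (fun x => {x.1, x.2.1, x.2.2.1, x.2.2.2})]
  · congr 1
    exact sum_congr rfl fun T hT => by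
      rw [distinctQuads_eq_filter_subset (mem_powersetCard.1 hT).1]
  · intro x hx
    simp only [distinctQuads, distinctTriples, mem_filter, mem_product, mem_offDiag] at hx
    exact ⟨by simp [insert_subset_iff, hx],
      card_eq_four.2 ⟨_, _, _, _, hx.2.1, hx.2.2.1, hx.2.2.2, hx.1.2.2.1, hx.1.2.2.2,
        hx.1.2.1.2.2.2, rfl⟩⟩

variable {f : V → V → ℝ}

theorem sum_offDiag_insert (hsym : ∀ u v, f u v = f v u) {a : V} {R : Finset V}
    (ha : a ∉ R) :
    ∑ p ∈ (insert a R).offDiag, f p.1 p.2 = ∑ p ∈ R.offDiag, f p.1 p.2 + 2 * ∑ w ∈ R, f a w := by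
  rw [offDiag_insert ha, sum_union, sum_union, sum_product, sum_product_right, sum_singleton,
    sum_singleton]
  · simp_rw [hsym _ a]; ring
  all_goals
    simp only [disjoint_left, mem_union, mem_product, mem_offDiag, mem_singleton]
    grind

theorem sum_offDiag_eq_of_mem (hsym : ∀ u v, f u v = f v u) {T : Finset V} {u v : V}
    (hu : u ∈ T) (hv : v ∈ T) (huv : u ≠ v) :
    ∑ p ∈ T.offDiag, f p.1 p.2
      = 2 * f u v + 2 * ∑ w ∈ (T \ {u}) \ {v}, (f u w + f v w)
        + ∑ p ∈ ((T \ {u}) \ {v}).offDiag, f p.1 p.2 := by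
  have hT : T = insert u (insert v ((T \ {u}) \ {v})) := by
    ext x; simp only [mem_insert, mem_sdiff, mem_singleton]; grind
  conv_lhs => rw [hT]
  rw [sum_offDiag_insert hsym (by simp [huv]), sum_offDiag_insert hsym (by simp),
    sum_insert (by simp), sum_add_distrib]
  ring

theorem sq_sum_offDiag (hsym : ∀ u v, f u v = f v u) (T : Finset V) :
    (∑ p ∈ T.offDiag, f p.1 p.2) ^ 2
      = 2 * ∑ p ∈ T.offDiag, f p.1 p.2 ^ 2 + 4 * tripleSum f T + quadSum f T := by
  have htriple : ∑ p ∈ T.offDiag, ∑ w ∈ (T \ {p.1}) \ {p.2}, f p.1 p.2 * f p.2 w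
      = tripleSum f T :=
    sum_offDiag_eq_sum_sum T fun u v => ∑ w ∈ (T \ {u}) \ {v}, f u v * f v w
  have htriple' : ∑ p ∈ T.offDiag, ∑ w ∈ (T \ {p.1}) \ {p.2}, f p.1 p.2 * f p.1 w
      = tripleSum f T := by
    rw [← htriple, sum_offDiag_comm T fun u v => ∑ w ∈ (T \ {u}) \ {v}, f u v * f u w]
    refine sum_congr rfl fun p _ => ?_
    rw [sdiff_sdiff_comm, hsym]
  have hquad : ∑ p ∈ T.offDiag, ∑ q ∈ ((T \ {p.1}) \ {p.2}).offDiag, f p.1 p.2 * f q.1 q.2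
      = quadSum f T := by
    rw [sum_offDiag_eq_sum_sum T fun u v =>
      ∑ q ∈ ((T \ {u}) \ {v}).offDiag, f u v * f q.1 q.2]
    exact sum_congr rfl fun u _ => sum_congr rfl fun v _ =>
      sum_offDiag_eq_sum_sum _ fun w z => f u v * f w z
  calc (∑ p ∈ T.offDiag, f p.1 p.2) ^ 2
      = ∑ p ∈ T.offDiag, f p.1 p.2 * (2 * f p.1 p.2
          + 2 * ∑ w ∈ (T \ {p.1}) \ {p.2}, (f p.1 w + f p.2 w)
          + ∑ q ∈ ((T \ {p.1}) \ {p.2}).offDiag, f q.1 q.2) := by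
        rw [sq, sum_mul]
        refine sum_congr rfl fun p hp => ?_
        obtain ⟨hu, hv, huv⟩ := mem_offDiag.1 hp
        rw [← sum_offDiag_eq_of_mem hsym hu hv huv]
    _ = 2 * ∑ p ∈ T.offDiag, f p.1 p.2 ^ 2
          + 2 * ∑ p ∈ T.offDiag, ∑ w ∈ (T \ {p.1}) \ {p.2}, f p.1 p.2 * f p.1 w
          + 2 * ∑ p ∈ T.offDiag, ∑ w ∈ (T \ {p.1}) \ {p.2}, f p.1 p.2 * f p.2 w
          + ∑ p ∈ T.offDiag, ∑ q ∈ ((T \ {p.1}) \ {p.2}).offDiag, f p.1 p.2 * f q.1 q.2 := by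
        simp only [mul_add, mul_sum, sum_add_distrib, sq]
        ring_nf
    _ = 2 * ∑ p ∈ T.offDiag, f p.1 p.2 ^ 2 + 4 * tripleSum f T + quadSum f T := by
        rw [htriple, htriple', hquad]
        ring

variable {S : Finset V} {n k : ℕ}

theorem sum_mcEst_div_choose (hS : #S = n) (hk2 : 2 ≤ k) (hkn : k ≤ n) :
    (∑ T ∈ S.powersetCard k, mcEst f n k T) / n.choose k = pairSum f S := by
  have hcount := descFactorial_mul_sum_powersetCard_sum_offDiag S k f
  rw [hS, Nat.cast_descFactorial_two, Nat.cast_descFactorial_two] at hcount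
  have hC : (n.choose k : ℝ) ≠ 0 := Nat.cast_ne_zero.2 (Nat.choose_pos hkn).ne'
  have hk : (2 : ℝ) ≤ k := by exact_mod_cast hk2
  have hk0 : (k : ℝ) ≠ 0 := by linarith
  have hk1 : (k : ℝ) - 1 ≠ 0 := by linarith
  simp only [mcEst, pairSum, ← mul_sum, ← sum_div]
  field_simp
  linear_combination hcount

theorem sum_mcEst_sq_div_choose (hsym : ∀ u v, f u v = f v u) (hS : #S = n) (hn4 : 4 ≤ n)
    (hk2 : 2 ≤ k) (hkn : k ≤ n) :
    (∑ T ∈ S.powersetCard k, mcEst f n k T ^ 2) / n.choose k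
      = (n * (n - 1) / (k * (k - 1))) ^ 2 / 4
        * (2 * k * (k - 1) * E2 f S n + 4 * k * (k - 1) * (k - 2) * E3 f S n
          + k * (k - 1) * (k - 2) * (k - 3) * E4 f S n) := by
  have h2 := descFactorial_mul_sum_powersetCard_sum_offDiag S k fun u v => f u v ^ 2
  have h3 := descFactorial_mul_sum_powersetCard_tripleSum S k f
  have h4 := descFactorial_mul_sum_powersetCard_quadSum S k f
  simp only [hS, Nat.cast_descFactorial_eq_prod_range, prod_range_succ, prod_range_zero,
    Nat.cast_zero, Nat.cast_one, Nat.cast_ofNat, sub_zero, one_mul] at h2 h3 h4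
  have hC : (n.choose k : ℝ) ≠ 0 := Nat.cast_ne_zero.2 (Nat.choose_pos hkn).ne'
  have hn : (4 : ℝ) ≤ n := by exact_mod_cast hn4
  have hk : (2 : ℝ) ≤ k := by exact_mod_cast hk2
  have hn0 : (n : ℝ) ≠ 0 := by linarith
  have hn1 : (n : ℝ) - 1 ≠ 0 := by linarith
  have hn2 : (n : ℝ) - 2 ≠ 0 := by linarith
  have hn3 : (n : ℝ) - 3 ≠ 0 := by linarith
  have hk0 : (k : ℝ) ≠ 0 := by linarith
  have hk1 : (k : ℝ) - 1 ≠ 0 := by linarith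
  have hsq : ∀ T, mcEst f n k T ^ 2 = (n * (n - 1) / (k * (k - 1))) ^ 2 / 4
      * (2 * ∑ p ∈ T.offDiag, f p.1 p.2 ^ 2 + 4 * tripleSum f T + quadSum f T) := fun T => by
    rw [mcEst, pairSum, ← sq_sum_offDiag hsym]
    ring
  rw [sum_congr rfl fun T _ => hsq T, ← mul_sum, sum_add_distrib, sum_add_distrib, ← mul_sum,
    ← mul_sum, eq_div_of_mul_eq (by positivity) ((mul_comm _ _).trans h2),
    eq_div_of_mul_eq (by positivity) ((mul_comm _ _).trans h3),
    eq_div_of_mul_eq (by positivity) ((mul_comm _ _).trans h4), E2, E3, E4]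
  field_simp

theorem pairSum_sq (hsym : ∀ u v, f u v = f v u) (hn4 : 4 ≤ n) :
    pairSum f S ^ 2 = n * (n - 1) / 4
      * (2 * E2 f S n + 4 * (n - 2) * E3 f S n + (n - 2) * (n - 3) * E4 f S n) := by
  have hn : (4 : ℝ) ≤ n := by exact_mod_cast hn4
  have hn0 : (n : ℝ) ≠ 0 := by linarith
  have hn1 : (n : ℝ) - 1 ≠ 0 := by linarith
  have hn2 : (n : ℝ) - 2 ≠ 0 := by linarith
  have hn3 : (n : ℝ) - 3 ≠ 0 := by linarith
  rw [pairSum, div_pow, sq_sum_offDiag hsym, E2, E3, E4]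
  field_simp
  ring

end

/-- Exact variance of the uniform subset estimator:
`Var[f̂] = (n(n-1)(n-k))/(2k(k-1)) · [2(E3−E4)kn + (E2−4E3+3E4)(n+k−1)]`. -/
theorem mc_variance_formula {V : Type*} [DecidableEq V] (S : Finset V) (n k : ℕ)
    (hn : S.card = n) (hn4 : 4 ≤ n) (hk2 : 2 ≤ k) (hkn : k ≤ n)
    (f : V → V → ℝ) (hsym : ∀ u v, f u v = f v u) :
    mcVar f S n k
      = ((n : ℝ) * ((n : ℝ) - 1) * ((n : ℝ) - (k : ℝ))) / (2 * (k : ℝ) * ((k : ℝ) - 1))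
          * (2 * (E3 f S n - E4 f S n) * (k : ℝ) * (n : ℝ)
             + (E2 f S n - 4 * E3 f S n + 3 * E4 f S n) * ((n : ℝ) + (k : ℝ) - 1)) := by
  have hk : (2 : ℝ) ≤ k := by exact_mod_cast hk2
  have hk0 : (k : ℝ) ≠ 0 := by linarith
  have hk1 : (k : ℝ) - 1 ≠ 0 := by linarith
  rw [mcVar, sum_mcEst_sq_div_choose hsym hn hn4 hk2 hkn, sum_mcEst_div_choose hn hk2 hkn,
    pairSum_sq hsym hn4]
  field_simp
  ring
end

section
/- Let S_k be a uniform k-subset of an n-element set S and let f be a function on unordered pairs with total f(S). The variance of the estimator f̂ = (n(n-1))/(k(k-1))·f(S_k) satisfies Var[f̂] = ((n(n-1))/(k(k-1)) − 1)·∑_{u<v} f(u,v)² + ((n(n-1))/(k(k-1))·(k-2)/(n-2) − 1)·∑_{|{u,v,w}|=3} f(u,v)f(v,w) + ((n(n-1))/(k(k-1))·((k-2)(k-3))/((n-2)(n-3)) − 1)·∑_{|{u,v,w,z}|=4} f(u,v)f(w,z), where the second sum is over all ordered triples of distinct vertices and the third over all configurations of two disjoint unordered pairs. -/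
open Finset

/-!
Write `f(T) = ∑_{p ∈ S.offDiag, p ⊆ T} f(p) / 2`. After squaring and exchanging the sums, every
ordered pair `(p, q)` of edges is counted once for each `k`-subset containing the `j = |p ∪ q|`
points it involves, that is `C(n - j, k - j)` times. Splitting `(p, q)` by how much the two edges
overlap (`j = 2, 3, 4`) turns such a weighted double sum into
`2 φ(2) ∑ f² + 4 φ(3) tripleSum + φ(4) quadSum`; taking `φ = 1` expands `f(S)²` in the same way.
The coefficients then come from `C(n - j, k - j) · n⋯(n - j + 1) = C(n, k) · k⋯(k - j + 1)`.
-/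

namespace Finset

variable {V : Type*} [DecidableEq V] (s : Finset V)

section Overlap

variable {M : Type*} [AddCommMonoid M]

theorem sum_offDiag_eq_sum_sum_sdiff (g : V × V → M) :
    ∑ p ∈ s.offDiag, g p = ∑ u ∈ s, ∑ v ∈ s \ {u}, g (u, v) :=
  sum_finset_product _ _ _ fun p => by simp [eq_comm]

theorem sum_sum_sdiff_comm (g : V → V → M) :
    ∑ u ∈ s, ∑ v ∈ s \ {u}, g u v = ∑ u ∈ s, ∑ v ∈ s \ {u}, g v u :=
  sum_comm' fun u v => by simp; tauto

theorem sum_sum_sdiff_sum_sum_sdiff_split (F : V → V → V → V → M) :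
    ∑ u ∈ s, ∑ v ∈ s \ {u}, ∑ w ∈ s, ∑ z ∈ s \ {w}, F u v w z =
      ∑ u ∈ s, ∑ v ∈ s \ {u}, (F u v u v + F u v v u +
        ∑ w ∈ (s \ {u}) \ {v}, (F u v u w + F u v v w + F u v w u + F u v w v +
          ∑ z ∈ ((s \ {u}) \ {v}) \ {w}, F u v w z)) := by
  refine sum_congr rfl fun u hu => sum_congr rfl fun v hv => ?_
  have hu' : u ∈ s \ {v} := by simp_all [eq_comm]
  have split_w : ∀ w ∈ (s \ {u}) \ {v}, ∑ z ∈ s \ {w}, F u v w z =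
      F u v w u + F u v w v + ∑ z ∈ ((s \ {u}) \ {v}) \ {w}, F u v w z := by
    intro w hw
    have hu'' : u ∈ s \ {w} := by simp_all [eq_comm]
    have hv'' : v ∈ (s \ {w}) \ {u} := by simp_all [eq_comm]
    have hz : ((s \ {w}) \ {u}) \ {v} = ((s \ {u}) \ {v}) \ {w} := by ext; simp; tauto
    rw [sum_eq_add_sum_sdiff_singleton_of_mem hu'', sum_eq_add_sum_sdiff_singleton_of_mem hv'',
      hz, add_assoc]
  rw [sum_eq_add_sum_sdiff_singleton_of_mem hu, sum_eq_add_sum_sdiff_singleton_of_mem hv,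
    sum_eq_add_sum_sdiff_singleton_of_mem hv, sum_eq_add_sum_sdiff_singleton_of_mem hu',
    sdiff_sdiff_comm (a := s) (b := {v}), sum_congr rfl split_w]
  simp only [sum_add_distrib]
  abel

end Overlap

theorem sum_mul_left_eq_tripleSum (f : V → V → ℝ) (hsym : ∀ u v, f u v = f v u) :
    ∑ u ∈ s, ∑ v ∈ s \ {u}, ∑ w ∈ (s \ {u}) \ {v}, f u v * f u w = tripleSum f s := by
  rw [sum_sum_sdiff_comm]
  refine sum_congr rfl fun u _ => sum_congr rfl fun v _ => ?_
  rw [sdiff_sdiff_comm, hsym]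

theorem sum_offDiag_sum_offDiag_weight_card (φ : ℕ → ℝ) (f : V → V → ℝ)
    (hsym : ∀ u v, f u v = f v u) :
    ∑ p ∈ s.offDiag, ∑ q ∈ s.offDiag, φ #{p.1, p.2, q.1, q.2} * (f p.1 p.2 * f q.1 q.2) =
      2 * φ 2 * ∑ p ∈ s.offDiag, f p.1 p.2 ^ 2 + 4 * φ 3 * tripleSum f s
        + φ 4 * quadSum f s := by
  calc _ = ∑ u ∈ s, ∑ v ∈ s \ {u}, (2 * φ 2 * f u v ^ 2 +
          ∑ w ∈ (s \ {u}) \ {v}, (2 * φ 3 * (f u v * f u w) + 2 * φ 3 * (f u v * f v w) +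
            φ 4 * ∑ z ∈ ((s \ {u}) \ {v}) \ {w}, f u v * f w z)) := by
        simp only [sum_offDiag_eq_sum_sum_sdiff]
        rw [sum_sum_sdiff_sum_sum_sdiff_split]
        refine sum_congr rfl fun u _ => sum_congr rfl fun v hv => ?_
        have h2 : #{u, v, u, v} = 2 ∧ #{u, v, v, u} = 2 := by
          simp_all [card_insert_of_notMem, eq_comm]
        rw [h2.1, h2.2, hsym v u, ← two_mul, ← sq, ← mul_assoc]
        congr 1
        refine sum_congr rfl fun w hw => ?_
        simp only [mem_sdiff, mem_singleton] at hv hw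
        have h3 : #{u, v, u, w} = 3 ∧ #{u, v, v, w} = 3 ∧ #{u, v, w, u} = 3 ∧
            #{u, v, w, v} = 3 := by
          simp_all [card_insert_of_notMem, eq_comm]
        have h4 : ∀ z ∈ ((s \ {u}) \ {v}) \ {w}, #{u, v, w, z} = 4 := by
          intro z hz
          simp only [mem_sdiff, mem_singleton] at hz
          simp_all [card_insert_of_notMem, eq_comm]
        rw [sum_congr rfl fun z hz => by rw [h4 z hz], h3.1, h3.2.1, h3.2.2.1, h3.2.2.2,
          hsym w u, hsym w v, ← mul_sum]
        ring
    _ = _ := by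
        have h3 := sum_mul_left_eq_tripleSum s f hsym
        simp only [sum_add_distrib, ← mul_sum, sum_offDiag_eq_sum_sum_sdiff, tripleSum,
          quadSum] at h3 ⊢
        linear_combination 2 * φ 3 * h3

variable (k : ℕ)

theorem sum_powersetCard_sum_ite_subset {ι M : Type*} [AddCommMonoid M]
    (X : Finset ι) (A : ι → Finset V) (hA : ∀ i ∈ X, A i ⊆ s ∧ #(A i) ≤ k) (g : ι → M) :
    ∑ T ∈ s.powersetCard k, ∑ i ∈ X, (if A i ⊆ T then g i else 0) =
      ∑ i ∈ X, (#s - #(A i)).choose (k - #(A i)) • g i := by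
  rw [sum_comm]
  refine sum_congr rfl fun i hi => ?_
  rw [← sum_filter, sum_const, card_filter_powersetCard_subset _ _ _ (hA i hi).1 (hA i hi).2]

theorem sum_offDiag_of_subset {M : Type*} [AddCommMonoid M] {T : Finset V} (hT : T ⊆ s)
    (g : V × V → M) :
    ∑ p ∈ T.offDiag, g p = ∑ p ∈ s.offDiag, if {p.1, p.2} ⊆ T then g p else 0 := by
  rw [← sum_filter]
  congr 1
  ext p
  simp only [mem_offDiag, mem_filter, insert_subset_iff, singleton_subset_iff]
  exact ⟨fun h => ⟨⟨hT h.1, hT h.2.1, h.2.2⟩, h.1, h.2.1⟩, fun h => ⟨h.2.1, h.2.2, h.1.2.2⟩⟩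

variable {R : Type*} [Semiring R]

theorem sum_powersetCard_sum_offDiag (hk : 2 ≤ k) (g : V × V → R) :
    ∑ T ∈ s.powersetCard k, ∑ p ∈ T.offDiag, g p =
      (#s - 2).choose (k - 2) * ∑ p ∈ s.offDiag, g p := by
  rw [sum_congr rfl fun T hT => sum_offDiag_of_subset s (mem_powersetCard.1 hT).1 g,
    sum_powersetCard_sum_ite_subset, mul_sum]
  · refine sum_congr rfl fun p hp => ?_
    rw [card_pair (mem_offDiag.1 hp).2.2, nsmul_eq_mul]
  · intro p hp
    obtain ⟨h1, h2, -⟩ := mem_offDiag.1 hp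
    exact ⟨by simp [insert_subset_iff, h1, h2], card_le_two.trans hk⟩

theorem sum_powersetCard_sq_sum_offDiag (hk : 4 ≤ k) (g : V × V → R) :
    ∑ T ∈ s.powersetCard k, (∑ p ∈ T.offDiag, g p) ^ 2 =
      ∑ p ∈ s.offDiag, ∑ q ∈ s.offDiag,
        ((#s - #{p.1, p.2, q.1, q.2}).choose (k - #{p.1, p.2, q.1, q.2}) : R) * (g p * g q) := by
  have hunion (T : Finset V) (p q : V × V) :
      ({p.1, p.2} ⊆ T ∧ {q.1, q.2} ⊆ T) ↔ {p.1, p.2, q.1, q.2} ⊆ T := by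
    simp [insert_subset_iff, and_assoc]
  rw [sum_congr rfl fun T hT => by
      rw [sum_offDiag_of_subset s (mem_powersetCard.1 hT).1 g, sq, sum_mul_sum, ← sum_product']]
  simp only [ite_zero_mul_ite_zero, hunion]
  rw [sum_powersetCard_sum_ite_subset]
  · simp only [sum_product, nsmul_eq_mul]
  · intro x hx
    simp only [mem_product, mem_offDiag] at hx
    exact ⟨by simp [insert_subset_iff, hx], card_le_four.trans hk⟩

end Finset

section PairSum

variable {V : Type*} [DecidableEq V] (s : Finset V) (k : ℕ) (f : V → V → ℝ)

theorem sum_powersetCard_pairSum (hk : 2 ≤ k) :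
    ∑ T ∈ s.powersetCard k, pairSum f T = (#s - 2).choose (k - 2) * pairSum f s := by
  simp only [pairSum, ← sum_div]
  rw [sum_powersetCard_sum_offDiag s k hk (fun p => f p.1 p.2), mul_div_assoc]

theorem sq_pairSum (hsym : ∀ u v, f u v = f v u) :
    pairSum f s ^ 2 =
      (2 * ∑ p ∈ s.offDiag, f p.1 p.2 ^ 2 + 4 * tripleSum f s + quadSum f s) / 4 := by
  have h := sum_offDiag_sum_offDiag_weight_card s (fun _ => 1) f hsym
  simp only [one_mul, ← sum_mul_sum, ← sq] at h
  rw [pairSum, div_pow, h]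
  norm_num

theorem sum_powersetCard_sq_pairSum (hk : 4 ≤ k) (hsym : ∀ u v, f u v = f v u) :
    ∑ T ∈ s.powersetCard k, pairSum f T ^ 2 =
      (2 * (#s - 2).choose (k - 2) * ∑ p ∈ s.offDiag, f p.1 p.2 ^ 2
        + 4 * (#s - 3).choose (k - 3) * tripleSum f s
        + (#s - 4).choose (k - 4) * quadSum f s) / 4 := by
  simp only [pairSum, div_pow, ← sum_div]
  rw [sum_powersetCard_sq_sum_offDiag s k hk (fun p => f p.1 p.2),
    sum_offDiag_sum_offDiag_weight_card s (fun j => ((#s - j).choose (k - j) : ℝ)) f hsym]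
  norm_num

end PairSum

theorem Nat.choose_sub_mul_descFactorial {n k j : ℕ} (hjk : j ≤ k) :
    (n - j).choose (k - j) * n.descFactorial j = n.choose k * k.descFactorial j := by
  rw [descFactorial_eq_factorial_mul_choose, descFactorial_eq_factorial_mul_choose,
    mul_left_comm (n.choose k), choose_mul hjk]
  ring

theorem Nat.cast_descFactorial_of_le {R : Type*} [CommRing R] {n j : ℕ} (h : j ≤ n) :
    (n.descFactorial j : R) = ∏ i ∈ Finset.range j, ((n : R) - i) := by
  rw [descFactorial_eq_prod_range, cast_prod]
  exact Finset.prod_congr rfl fun i hi => cast_sub (by simp at hi; omega)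

theorem Nat.cast_choose_sub_eq_div {K : Type*} [Field K] [CharZero K] {n k j : ℕ} (hjk : j ≤ k)
    (hkn : k ≤ n) :
    ((n - j).choose (k - j) : K) =
      n.choose k * (∏ i ∈ Finset.range j, ((k : K) - i)) / ∏ i ∈ Finset.range j, ((n : K) - i) := by
  have hprod : ∏ i ∈ Finset.range j, ((n : K) - i) ≠ 0 :=
    Finset.prod_ne_zero_iff.2 fun i hi => sub_ne_zero.2 (by norm_cast; simp at hi; omega)
  rw [eq_div_iff hprod, ← cast_descFactorial_of_le (hjk.trans hkn), ← cast_descFactorial_of_le hjk]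
  exact_mod_cast choose_sub_mul_descFactorial hjk

theorem mc_variance_split_formula_general {V : Type*} [DecidableEq V] (S : Finset V) (n k : ℕ)
    (hn : S.card = n) (hk4 : 4 ≤ k) (hkn : k ≤ n)
    (f : V → V → ℝ) (hsym : ∀ u v, f u v = f v u) :
    mcVar f S n k
      = (((n : ℝ) * ((n : ℝ) - 1)) / ((k : ℝ) * ((k : ℝ) - 1)) - 1)
          * ((∑ p ∈ S.offDiag, (f p.1 p.2) ^ 2) / 2)
        + (((n : ℝ) * ((n : ℝ) - 1)) / ((k : ℝ) * ((k : ℝ) - 1))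
            * (((k : ℝ) - 2) / ((n : ℝ) - 2)) - 1) * tripleSum f S
        + (((n : ℝ) * ((n : ℝ) - 1)) / ((k : ℝ) * ((k : ℝ) - 1))
            * ((((k : ℝ) - 2) * ((k : ℝ) - 3)) / (((n : ℝ) - 2) * ((n : ℝ) - 3))) - 1)
          * (quadSum f S / 4) := by
  subst hn
  have hN : ((#S).choose k : ℝ) ≠ 0 := by exact_mod_cast (Nat.choose_pos hkn).ne'
  have hk : (4 : ℝ) ≤ k := by exact_mod_cast hk4
  have hn : (k : ℝ) ≤ #S := by exact_mod_cast hkn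
  have hk0 : (k : ℝ) ≠ 0 := by linarith
  have hk1 : (k : ℝ) - 1 ≠ 0 := by linarith
  have hn0 : (#S : ℝ) ≠ 0 := by linarith
  have hn1 : (#S : ℝ) - 1 ≠ 0 := by linarith
  have hn2 : (#S : ℝ) - 2 ≠ 0 := by linarith
  have hn3 : (#S : ℝ) - 3 ≠ 0 := by linarith
  simp only [mcVar, mcEst, mul_pow, div_pow, ← mul_sum,
    sum_powersetCard_pairSum S k f (by omega), sum_powersetCard_sq_pairSum S k f hk4 hsym,
    sq_pairSum S f hsym, Nat.cast_choose_sub_eq_div (by omega : 2 ≤ k) hkn,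
    Nat.cast_choose_sub_eq_div (by omega : 3 ≤ k) hkn, Nat.cast_choose_sub_eq_div hk4 hkn,
    prod_range_succ, prod_range_zero, Nat.cast_zero, Nat.cast_one, Nat.cast_ofNat, sub_zero,
    one_mul]
  field_simp
  ring

/-- Variance of the uniform subset estimator, expressed via the three overlap-type sums:
identical pairs, pairs sharing one vertex (ordered triples), and disjoint pairs. -/
theorem mc_variance_split_formula {V : Type*} [DecidableEq V] (S : Finset V) (n k : ℕ)
    (hn : S.card = n) (hn4 : 4 ≤ n) (hk4 : 4 ≤ k) (hkn : k ≤ n)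
    (f : V → V → ℝ) (hsym : ∀ u v, f u v = f v u) :
    mcVar f S n k
      = (((n : ℝ) * ((n : ℝ) - 1)) / ((k : ℝ) * ((k : ℝ) - 1)) - 1)
          * ((∑ p ∈ S.offDiag, (f p.1 p.2) ^ 2) / 2)
        + (((n : ℝ) * ((n : ℝ) - 1)) / ((k : ℝ) * ((k : ℝ) - 1))
            * (((k : ℝ) - 2) / ((n : ℝ) - 2)) - 1) * tripleSum f S
        + (((n : ℝ) * ((n : ℝ) - 1)) / ((k : ℝ) * ((k : ℝ) - 1))
            * ((((k : ℝ) - 2) * ((k : ℝ) - 3)) / (((n : ℝ) - 2) * ((n : ℝ) - 3))) - 1)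
          * (quadSum f S / 4) :=
  mc_variance_split_formula_general S n k hn hk4 hkn f hsym
end
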